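/- Let (k₁, k₂, k₃) = (2, 2, 1), w₁ = (x⁻¹, 0, 0, 0, 0, (1/2)·x⁻²) and w₂ = (0, 0, 0, −x⁻¹, x⁻², 0) (components in the order (a₁₂, a₁₃, a₂₃, b₁, b₂, b₃)). Then: E′(w₁), F′(w₁), E′(w₂), F′(w₂) ∈ B; w₁ ∉ B and w₂ ∉ B; there is no A ∈ G with Int A(w₁) − w₂ ∈ B; and every z ∈ V with E′(z) ∈ B, F′(z) ∈ B and z ∉ B admits some A ∈ G with either Int A(w₁) − z ∈ B or Int A(w₂) − z ∈ B. In other words, there exist exactly two up to isomorphism 𝔰′-even-homogeneous non-split supermanifolds with retract (2, 2, 1), corresponding to the classes of w₁ and w₂. -/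

import Mathlib

noncomputable section

open LaurentPolynomial

/-- `L = ℂ[x, x⁻¹]`, the Laurent polynomials over `ℂ`. -/
abbrev L : Type := LaurentPolynomial ℂ

/-- The coefficient of `x^n` in a Laurent polynomial. -/
def coeffL (p : L) (n : ℤ) : ℂ := (AddMonoidAlgebra.coeff p : ℤ →₀ ℂ) n

lemma coeffL_zero (n : ℤ) : coeffL 0 n = 0 := rfl

lemma coeffL_add (a b : L) (n : ℤ) : coeffL (a + b) n = coeffL a n + coeffL b n := by
  unfold coeffL; erw [Finsupp.add_apply]; rfl

lemma coeffL_smul (c : ℂ) (a : L) (n : ℤ) : coeffL (c • a) n = c * coeffL a n := by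
  unfold coeffL; erw [Finsupp.smul_apply]; rfl

/-- `L₊`: Laurent polynomials involving only nonnegative powers of `x`. -/
def Lplus : Submodule ℂ L where
  carrier := {p | ∀ n : ℤ, n < 0 → coeffL p n = 0}
  zero_mem' := fun n _ => coeffL_zero n
  add_mem' := by intro a b ha hb n hn; rw [coeffL_add, ha n hn, hb n hn, add_zero]
  smul_mem' := by intro c p hp n hn; rw [coeffL_smul, hp n hn, mul_zero]

/-- `L₋`: Laurent polynomials involving only nonpositive powers of `x`. -/
def Lminus : Submodule ℂ L where
  carrier := {p | ∀ n : ℤ, 0 < n → coeffL p n = 0}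
  zero_mem' := fun n _ => coeffL_zero n
  add_mem' := by intro a b ha hb n hn; rw [coeffL_add, ha n hn, hb n hn, add_zero]
  smul_mem' := by intro c p hp n hn; rw [coeffL_smul, hp n hn, mul_zero]

/-- The derivative `d/dx` on Laurent polynomials. -/
def D (p : L) : L := Finsupp.sum (AddMonoidAlgebra.coeff p : ℤ →₀ ℂ) fun n a => ((n : ℂ) * a) • T (n - 1)

/-- `V = L⁶`, the model of Čech 1-cochains with values in `T₂`: a tuple
`v = (a₁₂, a₁₃, a₂₃, b₁, b₂, b₃)` (components `v 0, …, v 5`) encodes the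
vector field `Σ_{i<j} a_{ij}(x)ξᵢξⱼ∂/∂x + Σ_t b_t(x)ξ₁ξ₂ξ₃∂/∂ξ_t` on `U₀ ∩ U₁`. -/
abbrev V : Type := Fin 6 → L

/-- `B₀ = (L₊)⁶`: cochains holomorphic in `U₀`. -/
def B0 : Submodule ℂ V := Submodule.pi Set.univ fun _ => Lplus

/-- The linear map `v ↦ x^m · (v i)`. -/
def cndA (m : ℤ) (i : Fin 6) : V →ₗ[ℂ] L :=
  (LinearMap.mulLeft ℂ (T m)).comp (LinearMap.proj i)

/-- The linear map `v ↦ x^m · (v i − c·x⁻¹·(v j))`. -/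
def cndB (m : ℤ) (c : ℂ) (i j : Fin 6) : V →ₗ[ℂ] L :=
  (LinearMap.mulLeft ℂ (T m)).comp
    (LinearMap.proj i - c • (LinearMap.mulLeft ℂ (T (-1))).comp (LinearMap.proj j))

/-- `B₁`: cochains holomorphic in `U₁`, i.e. `v` with
`x^(kᵢ+kⱼ−2)·a_{ij} ∈ L₋` for all `i < j` and
`x^(d−k_t)·(b_t − σ_t·k_t·x⁻¹·a_{(t)}) ∈ L₋` for `t = 1, 2, 3`
(σ₁ = 1, σ₂ = −1, σ₃ = 1, a₍₁₎ = a₂₃, a₍₂₎ = a₁₃, a₍₃₎ = a₁₂, d = k₁+k₂+k₃). -/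
def B1 (k1 k2 k3 : ℤ) : Submodule ℂ V :=
  Lminus.comap (cndA (k1 + k2 - 2) 0) ⊓
  Lminus.comap (cndA (k1 + k3 - 2) 1) ⊓
  Lminus.comap (cndA (k2 + k3 - 2) 2) ⊓
  Lminus.comap (cndB (k2 + k3) ((k1 : ℂ)) 3 2) ⊓
  Lminus.comap (cndB (k1 + k3) (-(k2 : ℂ)) 4 1) ⊓
  Lminus.comap (cndB (k1 + k2) ((k3 : ℂ)) 5 0)

/-- The coboundary subspace `B = B₀ + B₁`. -/
def B (k1 k2 k3 : ℤ) : Submodule ℂ V := B0 ⊔ B1 k1 k2 k3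

/-- Action of `e = ∂/∂x` on cocycles: the componentwise derivative. -/
def Eop : V → V := fun v i => D (v i)

/-- Action of `f = ∂/∂y` on cocycles, with components
`a_{ij} ↦ (2 − kᵢ − kⱼ)·x·a_{ij} − x²·a_{ij}′` and
`b_t ↦ σ_t·k_t·a₍ₜ₎ − (d − k_t)·x·b_t − x²·b_t′`. -/
def Fop (k1 k2 k3 : ℤ) : V → V := fun v =>
  ![((2 - k1 - k2 : ℤ) : ℂ) • (T 1 * v 0) - T 2 * D (v 0),
    ((2 - k1 - k3 : ℤ) : ℂ) • (T 1 * v 1) - T 2 * D (v 1),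
    ((2 - k2 - k3 : ℤ) : ℂ) • (T 1 * v 2) - T 2 * D (v 2),
    (k1 : ℂ) • v 2 - ((k2 + k3 : ℤ) : ℂ) • (T 1 * v 3) - T 2 * D (v 3),
    -((k2 : ℂ) • v 1) - ((k1 + k3 : ℤ) : ℂ) • (T 1 * v 4) - T 2 * D (v 4),
    (k3 : ℂ) • v 0 - ((k1 + k2 : ℤ) : ℂ) • (T 1 * v 5) - T 2 * D (v 5)]

/-- `N(v) = (0, 0, a₁₃, −b₂, 0, 0)`; `e′ = ∂/∂x + ξ₂∂/∂ξ₁` acts by `E′ = E + N`. -/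
def Nop : V → V := fun v => ![0, 0, v 1, -v 4, 0, 0]

/-- `M(v) = (0, a₂₃, 0, 0, −b₁, 0)`; `f′ = ∂/∂y + η₁∂/∂η₂` acts by `F′ = F + M`. -/
def Mop : V → V := fun v => ![0, v 2, 0, 0, -v 3, 0]

/-- The action `E′ = E + N` of `e′ = ∂/∂x + ξ₂∂/∂ξ₁`. -/
def E'op : V → V := fun v => Eop v + Nop v

/-- The action `F′ = F + M` of `f′ = ∂/∂y + η₁∂/∂η₂`. -/
def F'op (k1 k2 k3 : ℤ) : V → V := fun v => Fop k1 k2 k3 v + Mop v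

/-- `N″(v) = (0, a₁₂, a₁₃, −b₂, −b₃, 0)`;
`e″ = ∂/∂x + ξ₂∂/∂ξ₁ + ξ₃∂/∂ξ₂` acts by `E″ = E + N″`. -/
def N''op : V → V := fun v => ![0, v 0, v 1, -v 4, -v 5, 0]

/-- `M″(v) = (2a₁₃, 2a₂₃, 0, 0, −2b₁, −2b₂)`;
`f″ = ∂/∂y + 2η₁∂/∂η₂ + 2η₂∂/∂η₃` acts by `F″ = F + M″`. -/
def M''op : V → V := fun v => ![(2 : ℂ) • v 1, (2 : ℂ) • v 2, 0, 0, -((2 : ℂ) • v 3), -((2 : ℂ) • v 4)]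

/-- The action `E″ = E + N″` of `e″`. -/
def E''op : V → V := fun v => Eop v + N''op v

/-- The action `F″ = F + M″` of `f″`. -/
def F''op (k1 k2 k3 : ℤ) : V → V := fun v => Fop k1 k2 k3 v + M''op v

/-- `f` is a polynomial in `x` of degree at most `m` (in particular `f = 0`
when `m < 0`). -/
def degOK (m : ℤ) (f : L) : Prop := ∀ n : ℤ, n < 0 ∨ m < n → coeffL f n = 0

/-- The group `G = Aut E` of invertible `3×3` matrices `A = (A_{pq}(x))` whose
entry `A_{pq}` is a polynomial in `x` of degree at most `k q − k p` (and `0`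
if `k q < k p`), and whose inverse has entries of the same form. -/
structure GElt (k : Fin 3 → ℤ) where
  A : Matrix (Fin 3) (Fin 3) L
  Ainv : Matrix (Fin 3) (Fin 3) L
  mul_inv : A * Ainv = 1
  inv_mul : Ainv * A = 1
  degA : ∀ p q, degOK (k q - k p) (A p q)
  degAinv : ∀ p q, degOK (k q - k p) (Ainv p q)

/-- The action `Int A` of `G` on `V`:
`â_{pq} = Σ_{i<j} (A_{pi}A_{qj} − A_{qi}A_{pj})·a_{ij}` for `p < q`, and
`b̂_u = det(A)·(Σ_t β_{tu}·b_t + Σ_{i<j} σ_{l(ij)}·(β_{l(ij),u})′·a_{ij})`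
where `β = A⁻¹` and `l(ij)` is the index complementary to `{i, j}`. -/
def IntAct {k : Fin 3 → ℤ} (g : GElt k) (v : V) : V :=
  let A := g.A
  let β := g.Ainv
  ![(A 0 0 * A 1 1 - A 1 0 * A 0 1) * v 0 + (A 0 0 * A 1 2 - A 1 0 * A 0 2) * v 1 +
      (A 0 1 * A 1 2 - A 1 1 * A 0 2) * v 2,
    (A 0 0 * A 2 1 - A 2 0 * A 0 1) * v 0 + (A 0 0 * A 2 2 - A 2 0 * A 0 2) * v 1 +
      (A 0 1 * A 2 2 - A 2 1 * A 0 2) * v 2,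
    (A 1 0 * A 2 1 - A 2 0 * A 1 1) * v 0 + (A 1 0 * A 2 2 - A 2 0 * A 1 2) * v 1 +
      (A 1 1 * A 2 2 - A 2 1 * A 1 2) * v 2,
    A.det * (β 0 0 * v 3 + β 1 0 * v 4 + β 2 0 * v 5 +
      D (β 2 0) * v 0 - D (β 1 0) * v 1 + D (β 0 0) * v 2),
    A.det * (β 0 1 * v 3 + β 1 1 * v 4 + β 2 1 * v 5 +
      D (β 2 1) * v 0 - D (β 1 1) * v 1 + D (β 0 1) * v 2),
    A.det * (β 0 2 * v 3 + β 1 2 * v 4 + β 2 2 * v 5 +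
      D (β 2 2) * v 0 - D (β 1 2) * v 1 + D (β 0 2) * v 2)]

/-! In the coordinates `h1Coords` (eight coefficients of principal parts, whose common kernel is
exactly `B`), `H¹ = V/B` for `(k₁, k₂, k₃) = (2, 2, 1)` becomes `ℂ⁸`, on which `E′` and `F′` act by
explicit matrices whose common kernel is spanned by the classes of `w₁` and `w₂`: an invariant
class is `α[w₁] - β[w₂]`. Every `A ∈ G` has a constant invertible upper-left `2 × 2` block whose
determinant is the first coordinate of `Int A(w₁)`; as the first coordinate of `w₂` vanishes,
`Int A(w₁)` is never cohomologous to `w₂`. Conversely, the automorphisms with rows `(a, 0, 0)`,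
`(0, b, 0)`, `(p x, q, 1)` carry `[w₁]` to every invariant class with `α ≠ 0`, and `[w₂]` to every
nonzero multiple of itself. -/

lemma coeffL_T (k n : ℤ) : coeffL (T k) n = if k = n then 1 else 0 := by
  unfold coeffL; erw [LaurentPolynomial.T_apply]

lemma coeffL_T_mul (k : ℤ) (p : L) (n : ℤ) : coeffL (T k * p) n = coeffL p (n - k) := by
  unfold coeffL
  erw [AddMonoidAlgebra.coeff_single_mul_apply p (1 : ℂ) k n, one_mul]
  congr 1; ring

lemma coeffL_mul_T (p : L) (k n : ℤ) : coeffL (p * T k) n = coeffL p (n - k) := by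
  rw [mul_comm, coeffL_T_mul]

lemma coeffL_C_mul (c : ℂ) (p : L) (n : ℤ) : coeffL (C c * p) n = c * coeffL p n := by
  unfold coeffL
  erw [AddMonoidAlgebra.coeff_single_zero_mul p c n]

lemma coeffL_mul_C (p : L) (c : ℂ) (n : ℤ) : coeffL (p * C c) n = coeffL p n * c := by
  rw [mul_comm, coeffL_C_mul, mul_comm]

lemma coeffL_C (c : ℂ) (n : ℤ) : coeffL (C c) n = if n = 0 then c else 0 := by
  rw [← mul_one (C c), ← T_zero, coeffL_C_mul, coeffL_T]; split_ifs <;> simp_all [eq_comm]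

lemma coeffL_neg (a : L) (n : ℤ) : coeffL (-a) n = -coeffL a n := by
  simpa using coeffL_smul (-1) a n

lemma coeffL_sub (a b : L) (n : ℤ) : coeffL (a - b) n = coeffL a n - coeffL b n := by
  rw [sub_eq_add_neg, coeffL_add, coeffL_neg, sub_eq_add_neg]

lemma ext_coeffL {f g : L} (h : ∀ n, coeffL f n = coeffL g n) : f = g :=
  AddMonoidAlgebra.coeff_injective (Finsupp.ext h)

lemma coeffL_D (p : L) (n : ℤ) : coeffL (D p) n = ((n + 1 : ℤ) : ℂ) * coeffL p (n + 1) := by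
  unfold coeffL D
  erw [AddMonoidAlgebra.coeff_finsuppSum, Finsupp.sum_apply]
  have h : (Finsupp.sum p.coeff fun m a => AddMonoidAlgebra.coeff (((m : ℂ) * a) • T (m - 1) : L) n)
      = Finsupp.sum p.coeff fun m a => if m = n + 1 then (m : ℂ) * a else 0 := by
    refine Finsupp.sum_congr fun m _ => ?_
    erw [Finsupp.smul_apply, LaurentPolynomial.T_apply n (m - 1)]
    by_cases hm : m = n + 1
    · rw [if_pos (by omega : m - 1 = n), if_pos hm]; simp
    · rw [if_neg (by omega : ¬ m - 1 = n), if_neg hm]; simp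
  erw [h, Finsupp.sum_ite_eq' p.coeff (n + 1) (fun m a => (m : ℂ) * a)]
  by_cases hs : n + 1 ∈ p.coeff.support
  · rw [if_pos hs]
  · rw [if_neg hs, Finsupp.notMem_support_iff.mp hs, mul_zero]

lemma D_C (c : ℂ) : D (C c) = 0 :=
  ext_coeffL fun n => by rw [coeffL_D, coeffL_C, coeffL_zero]; split_ifs <;> simp_all

lemma D_zero : D 0 = 0 := by simpa using D_C 0

lemma D_one : D 1 = 0 := by simpa using D_C 1

lemma D_C_mul_T_one (c : ℂ) : D (C c * T 1) = C c :=
  ext_coeffL fun n => by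
    rw [coeffL_D, coeffL_C_mul, coeffL_T, coeffL_C]; split_ifs <;> first | omega | simp_all

lemma D_neg (f : L) : D (-f) = -D f :=
  ext_coeffL fun n => by rw [coeffL_neg, coeffL_D, coeffL_D, coeffL_neg, mul_neg]

def principalPart (p : L) : L := AddMonoidAlgebra.ofCoeff (Finsupp.filter (· < 0) p.coeff)

lemma coeffL_principalPart (p : L) (n : ℤ) :
    coeffL (principalPart p) n = if n < 0 then coeffL p n else 0 := by
  unfold coeffL principalPart
  erw [Finsupp.filter_apply]

lemma degOK_zero (m : ℤ) : degOK m 0 := fun n _ => coeffL_zero n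

lemma degOK_C {m : ℤ} (hm : 0 ≤ m) (c : ℂ) : degOK m (C c) := fun n hn => by
  rw [coeffL_C, if_neg (by omega)]

lemma degOK_one {m : ℤ} (hm : 0 ≤ m) : degOK m 1 := by simpa using degOK_C hm 1

lemma degOK_C_mul_T_one {m : ℤ} (hm : 1 ≤ m) (c : ℂ) : degOK m (C c * T 1) := fun n hn => by
  rw [coeffL_C_mul, coeffL_T, if_neg (by omega), mul_zero]

lemma eq_zero_of_degOK_of_neg {m : ℤ} {f : L} (h : degOK m f) (hm : m < 0) : f = 0 :=
  ext_coeffL fun n => by rw [coeffL_zero, h n (by omega)]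

lemma eq_C_of_degOK_zero {f : L} (h : degOK 0 f) : f = C (coeffL f 0) :=
  ext_coeffL fun n => by
    rw [coeffL_C]
    split_ifs with hn
    · rw [hn]
    · exact h n (by omega)

lemma coeffL_cndA (m : ℤ) (i : Fin 6) (v : V) (n : ℤ) :
    coeffL (cndA m i v) n = coeffL (v i) (n - m) :=
  coeffL_T_mul m (v i) n

lemma coeffL_cndB (m : ℤ) (c : ℂ) (i j : Fin 6) (v : V) (n : ℤ) :
    coeffL (cndB m c i j v) n = coeffL (v i) (n - m) - c * coeffL (v j) (n - m + 1) := by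
  change coeffL (T m * (v i - c • (T (-1) * v j))) n = _
  rw [coeffL_T_mul, coeffL_sub, coeffL_smul, coeffL_T_mul, sub_neg_eq_add]

lemma mem_comap_cndA_iff {m : ℤ} {i : Fin 6} {v : V} :
    v ∈ Lminus.comap (cndA m i) ↔ ∀ n, -m < n → coeffL (v i) n = 0 := by
  refine ⟨fun h n hn => ?_, fun h n hn => ?_⟩
  · simpa [coeffL_cndA] using h (n + m) (by omega)
  · exact (coeffL_cndA m i v n).trans (h _ (by omega))

lemma mem_comap_cndB_iff {m : ℤ} {c : ℂ} {i j : Fin 6} {v : V} :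
    v ∈ Lminus.comap (cndB m c i j) ↔
      ∀ n, -m < n → coeffL (v i) n = c * coeffL (v j) (n + 1) := by
  refine ⟨fun h n hn => ?_, fun h n hn => ?_⟩
  · simpa [coeffL_cndB, sub_eq_zero] using h (n + m) (by omega)
  · exact (coeffL_cndB m c i j v n).trans (by rw [h _ (by omega), sub_self])

lemma mem_B1_iff {k1 k2 k3 : ℤ} {v : V} :
    v ∈ B1 k1 k2 k3 ↔
      (∀ n, 2 - k1 - k2 < n → coeffL (v 0) n = 0) ∧
      (∀ n, 2 - k1 - k3 < n → coeffL (v 1) n = 0) ∧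
      (∀ n, 2 - k2 - k3 < n → coeffL (v 2) n = 0) ∧
      (∀ n, -(k2 + k3) < n → coeffL (v 3) n = k1 * coeffL (v 2) (n + 1)) ∧
      (∀ n, -(k1 + k3) < n → coeffL (v 4) n = -k2 * coeffL (v 1) (n + 1)) ∧
      (∀ n, -(k1 + k2) < n → coeffL (v 5) n = k3 * coeffL (v 0) (n + 1)) := by
  simp only [B1, Submodule.mem_inf, mem_comap_cndA_iff, mem_comap_cndB_iff, neg_sub,
    sub_add_eq_sub_sub, and_assoc]

/-- Coordinates on `H¹ = V / B 2 2 1` (see `ker_h1Coords`). -/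
def h1Coords : V →ₗ[ℂ] (Fin 8 → ℂ) where
  toFun v := ![coeffL (v 0) (-1), coeffL (v 3) (-1), coeffL (v 3) (-2) - 2 * coeffL (v 2) (-1),
    coeffL (v 4) (-1), coeffL (v 4) (-2) + 2 * coeffL (v 1) (-1), coeffL (v 5) (-1),
    coeffL (v 5) (-2) - coeffL (v 0) (-1), coeffL (v 5) (-3) - coeffL (v 0) (-2)]
  map_add' u v := by
    ext i; fin_cases i <;> simp [coeffL_add] <;> ring
  map_smul' c v := by
    ext i; fin_cases i <;> simp [coeffL_smul] <;> ring

lemma B0_le_ker_h1Coords : B0 ≤ LinearMap.ker h1Coords := by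
  intro v hv
  have h : ∀ i n, n < 0 → coeffL (v i) n = 0 := fun i => Submodule.mem_pi.mp hv i (Set.mem_univ i)
  ext i; fin_cases i <;>
    simp [h1Coords, h _ (-1) (by norm_num), h _ (-2) (by norm_num), h _ (-3) (by norm_num)]

lemma B1_le_ker_h1Coords : B1 2 2 1 ≤ LinearMap.ker h1Coords := by
  intro v hv
  obtain ⟨h0, h1, h2, h3, h4, h5⟩ := mem_B1_iff.mp hv
  norm_num at h0 h1 h2 h3 h4 h5
  ext i; fin_cases i <;>
    simp [h1Coords, h0 (-1) (by norm_num), h3 (-1) (by norm_num), h3 (-2) (by norm_num),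
      h4 (-1) (by norm_num), h4 (-2) (by norm_num), h5 (-1) (by norm_num), h5 (-2) (by norm_num),
      h5 (-3) (by norm_num), h0 0 (by norm_num), h1 0 (by norm_num), h2 0 (by norm_num)]

lemma ker_h1Coords_le_B : LinearMap.ker h1Coords ≤ B 2 2 1 := by
  intro v hv
  have hΦ : ∀ i, h1Coords v i = 0 := fun i => congrFun (LinearMap.mem_ker.mp hv) i
  have e0 := hΦ 0; have e1 := hΦ 1; have e2 := hΦ 2; have e3 := hΦ 3
  have e4 := hΦ 4; have e5 := hΦ 5; have e6 := hΦ 6; have e7 := hΦ 7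
  simp [h1Coords, sub_eq_zero, add_eq_zero_iff_eq_neg] at e0 e1 e2 e3 e4 e5 e6 e7
  have hpp : (fun i => principalPart (v i)) ∈ B1 2 2 1 := by
    refine mem_B1_iff.mpr ⟨?_, ?_, ?_, ?_, ?_, ?_⟩ <;> intro n hn <;> norm_num at hn <;>
      rcases lt_or_ge n 0 with hn' | hn'
    all_goals first
      | (interval_cases n <;> simp_all [coeffL_principalPart])
      | simp [coeffL_principalPart, hn'.not_gt, (by omega : 0 ≤ n + 1).not_gt]
  have hrest : v - (fun i => principalPart (v i)) ∈ B0 := by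
    refine Submodule.mem_pi.mpr fun i _ n hn => ?_
    simp [coeffL_sub, coeffL_principalPart, hn]
  simpa [B] using Submodule.add_mem _ (Submodule.mem_sup_left hrest) (Submodule.mem_sup_right hpp)

theorem ker_h1Coords : LinearMap.ker h1Coords = B 2 2 1 :=
  le_antisymm ker_h1Coords_le_B (sup_le B0_le_ker_h1Coords B1_le_ker_h1Coords)

lemma mem_B_iff {v : V} : v ∈ B 2 2 1 ↔ h1Coords v = 0 := by
  rw [← ker_h1Coords, LinearMap.mem_ker]

lemma sub_mem_B_iff {u v : V} : u - v ∈ B 2 2 1 ↔ h1Coords u = h1Coords v := by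
  rw [mem_B_iff, map_sub, sub_eq_zero]

/-- The map induced by `E′` on `H¹`, in the coordinates `h1Coords`. -/
def E'h1 (c : Fin 8 → ℂ) : Fin 8 → ℂ :=
  ![0, -c 3, -(c 1 + c 4), 0, -c 3, 0, -c 5, -(c 0 + 2 * c 6)]

/-- The map induced by `F′` on `H¹`, in the coordinates `h1Coords`. -/
def F'h1 (c : Fin 8 → ℂ) : Fin 8 → ℂ :=
  ![0, -c 2, 0, -(c 1 + c 4), -c 2, -(c 0 + 2 * c 6), -c 7, 0]

lemma h1Coords_E'op (z : V) : h1Coords (E'op z) = E'h1 (h1Coords z) := by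
  unfold E'op Eop
  ext i; fin_cases i <;>
    simp [E'h1, h1Coords, Nop, Matrix.vecHead, Matrix.vecTail, coeffL_add, coeffL_neg, coeffL_D] <;>
    ring

lemma h1Coords_F'op (z : V) : h1Coords (F'op 2 2 1 z) = F'h1 (h1Coords z) := by
  ext i; fin_cases i <;>
    simp [F'h1, h1Coords, F'op, Fop, Mop, coeffL_add, coeffL_sub, coeffL_neg, coeffL_smul,
      coeffL_mul_T, coeffL_D] <;> ring

lemma eq_of_E'h1_eq_zero_of_F'h1_eq_zero {c : Fin 8 → ℂ} (hE : E'h1 c = 0) (hF : F'h1 c = 0) :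
    c = ![c 0, c 1, 0, 0, -c 1, 0, -c 0 / 2, 0] := by
  simp only [E'h1, F'h1, funext_iff, Fin.forall_fin_succ] at hE hF
  simp at hE hF
  obtain ⟨h3, h14, -, h5, h06⟩ := hE
  obtain ⟨h2, -, -, -, h7⟩ := hF
  have h4 : c 4 = -c 1 := by linear_combination -h14
  have h6 : c 6 = -c 0 / 2 := by linear_combination -h06 / 2
  ext i; fin_cases i <;> simp [h2, h3, h4, h5, h6, h7]

def w₁ : V := ![T (-1), 0, 0, 0, 0, (1 / 2 : ℂ) • T (-2)]

def w₂ : V := ![0, 0, 0, -T (-1), T (-2), 0]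

lemma h1Coords_w₁ : h1Coords w₁ = ![1, 0, 0, 0, 0, 0, -1 / 2, 0] := by
  ext i; fin_cases i <;> simp [h1Coords, w₁, coeffL_smul, coeffL_T, coeffL_zero]
  norm_num

lemma h1Coords_w₂ : h1Coords w₂ = ![0, -1, 0, 0, 1, 0, 0, 0] := by
  ext i; fin_cases i <;> simp [h1Coords, w₂, coeffL_neg, coeffL_T, coeffL_zero]

lemma E'op_F'op_w₁_mem_B : E'op w₁ ∈ B 2 2 1 ∧ F'op 2 2 1 w₁ ∈ B 2 2 1 := by
  simp [mem_B_iff, h1Coords_E'op, h1Coords_F'op, h1Coords_w₁, E'h1, F'h1]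
  norm_num

lemma E'op_F'op_w₂_mem_B : E'op w₂ ∈ B 2 2 1 ∧ F'op 2 2 1 w₂ ∈ B 2 2 1 := by
  simp [mem_B_iff, h1Coords_E'op, h1Coords_F'op, h1Coords_w₂, E'h1, F'h1]

namespace GElt

variable {k : Fin 3 → ℤ} (g : GElt k)

lemma A_eq_zero {p q : Fin 3} (h : k q < k p) : g.A p q = 0 :=
  eq_zero_of_degOK_of_neg (g.degA p q) (by omega)

lemma A_eq_C {p q : Fin 3} (h : k q = k p) : g.A p q = C (coeffL (g.A p q) 0) :=
  eq_C_of_degOK_zero (by simpa [h] using g.degA p q)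

lemma exists_upperBlock_det (h01 : k 0 = k 1) (h2 : k 2 < k 0) :
    ∃ δ : ℂ, δ ≠ 0 ∧ g.A 0 0 * g.A 1 1 - g.A 1 0 * g.A 0 1 = C δ := by
  have e02 := g.A_eq_zero (p := 0) (q := 2) h2
  have e12 := g.A_eq_zero (p := 1) (q := 2) (h01 ▸ h2)
  have entry : ∀ i j, (g.A * g.Ainv) i j = (1 : Matrix (Fin 3) (Fin 3) L) i j := by
    rw [g.mul_inv]; intro i j; rfl
  have h00 := entry 0 0; have h01' := entry 0 1; have h11 := entry 1 1
  simp only [Matrix.mul_apply, Fin.sum_univ_three, e02, e12, zero_mul, add_zero,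
    Matrix.one_apply] at h00 h01' h11
  simp at h00 h01' h11
  -- `A` is block lower triangular, so its upper-left block is inverted by that of `A⁻¹`.
  have hunit : (g.A 0 0 * g.A 1 1 - g.A 1 0 * g.A 0 1) *
      (g.Ainv 0 0 * g.Ainv 1 1 - g.Ainv 1 0 * g.Ainv 0 1) = 1 := by
    linear_combination (g.A 1 0 * g.Ainv 0 1 + g.A 1 1 * g.Ainv 1 1) * h00 + h11 -
      (g.A 1 0 * g.Ainv 0 0 + g.A 1 1 * g.Ainv 1 0) * h01'
  rw [g.A_eq_C (p := 0) (q := 0) rfl, g.A_eq_C (p := 1) (q := 1) rfl,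
    g.A_eq_C (p := 1) (q := 0) h01, g.A_eq_C (p := 0) (q := 1) h01.symm,
    ← map_mul, ← map_mul, ← map_sub] at hunit ⊢
  refine ⟨_, fun h0 => ?_, rfl⟩
  rw [h0, map_zero, zero_mul] at hunit
  exact zero_ne_one hunit

def lowerTri (a b : ℂˣ) (p q : ℂ) : GElt ![2, 2, 1] where
  A := !![C (a : ℂ), 0, 0; 0, C (b : ℂ), 0; C p * T 1, C q, 1]
  Ainv := !![C (a⁻¹ : ℂˣ), 0, 0; 0, C (b⁻¹ : ℂˣ), 0;
    C (-(p * (a⁻¹ : ℂˣ))) * T 1, C (-(q * (b⁻¹ : ℂˣ))), 1]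
  mul_inv := by
    refine Matrix.ext fun i j => ?_
    fin_cases i <;> fin_cases j <;> simp [Matrix.mul_apply, Fin.sum_univ_three, ← map_mul]
    all_goals (simp only [map_mul]; ring)
  inv_mul := by
    refine Matrix.ext fun i j => ?_
    fin_cases i <;> fin_cases j <;>
      simp [Matrix.mul_apply, Fin.sum_univ_three, ← map_mul, mul_right_comm _ (T 1)]
  degA p q := by
    fin_cases p <;> fin_cases q
    all_goals first
      | exact degOK_zero _ | exact degOK_one (by decide) | exact degOK_C (by decide) _
      | exact degOK_C_mul_T_one (by decide) _
  degAinv p q := by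
    fin_cases p <;> fin_cases q
    all_goals first
      | exact degOK_zero _ | exact degOK_one (by decide) | exact degOK_C (by decide) _
      | exact degOK_C_mul_T_one (by decide) _

end GElt

lemma h1Coords_IntAct_w₁_zero_ne_zero {k : Fin 3 → ℤ} (g : GElt k) (h01 : k 0 = k 1)
    (h2 : k 2 < k 0) : h1Coords (IntAct g w₁) 0 ≠ 0 := by
  obtain ⟨δ, hδ, hdet⟩ := g.exists_upperBlock_det h01 h2
  simpa [h1Coords, IntAct, w₁, hdet, coeffL_C_mul, coeffL_T] using hδ

lemma not_exists_IntAct_w₁_sub_w₂_mem_B :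
    ¬∃ g : GElt ![2, 2, 1], IntAct g w₁ - w₂ ∈ B 2 2 1 := by
  rintro ⟨g, hg⟩
  apply h1Coords_IntAct_w₁_zero_ne_zero g rfl (by decide)
  rw [sub_mem_B_iff.mp hg, h1Coords_w₂]
  rfl

lemma h1Coords_IntAct_lowerTri_w₁ (a b : ℂˣ) (p q : ℂ) :
    h1Coords (IntAct (GElt.lowerTri a b p q) w₁) =
      ![(a : ℂ) * b, -(3 / 2) * p * b, 0, 0, 3 / 2 * a * q, 0, -(a * b) / 2, 0] := by
  ext i; fin_cases i <;>
    simp [h1Coords, IntAct, GElt.lowerTri, w₁, Matrix.det_fin_three, ← map_mul, D_zero, D_one, D_C,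
      D_neg, D_C_mul_T_one, coeffL_add, coeffL_neg, coeffL_smul, coeffL_C_mul, coeffL_mul_T,
      coeffL_mul_C, coeffL_C] <;> field_simp <;> ring

lemma h1Coords_IntAct_lowerTri_w₂ (a b : ℂˣ) (p q : ℂ) :
    h1Coords (IntAct (GElt.lowerTri a b p q) w₂) = ![0, -(b : ℂ), 0, 0, a, 0, 0, 0] := by
  ext i; fin_cases i <;>
    simp [h1Coords, IntAct, GElt.lowerTri, w₂, Matrix.det_fin_three, ← map_mul, D_zero, D_one, D_C,
      coeffL_neg, coeffL_C_mul, coeffL_mul_T, coeffL_C, coeffL_zero]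
  field_simp

lemma exists_IntAct_sub_mem_B {z : V} (hE : E'op z ∈ B 2 2 1) (hF : F'op 2 2 1 z ∈ B 2 2 1)
    (hz : z ∉ B 2 2 1) :
    ∃ g : GElt ![2, 2, 1], IntAct g w₁ - z ∈ B 2 2 1 ∨ IntAct g w₂ - z ∈ B 2 2 1 := by
  rw [mem_B_iff, h1Coords_E'op] at hE
  rw [mem_B_iff, h1Coords_F'op] at hF
  rw [mem_B_iff] at hz
  simp only [sub_mem_B_iff]
  obtain ⟨α, β, hc⟩ : ∃ α β : ℂ, h1Coords z = ![α, β, 0, 0, -β, 0, -α / 2, 0] :=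
    ⟨_, _, eq_of_E'h1_eq_zero_of_F'h1_eq_zero hE hF⟩
  rw [hc] at hz ⊢
  by_cases hα : α = 0
  · have hβ : -β ≠ 0 := fun hβ => hz (by simp_all)
    refine ⟨GElt.lowerTri (Units.mk0 _ hβ) (Units.mk0 _ hβ) 0 0, Or.inr ?_⟩
    simp [h1Coords_IntAct_lowerTri_w₂, hα]
  · refine ⟨GElt.lowerTri (Units.mk0 _ hα) 1 (-2 * β / 3) (-2 * β / (3 * α)), Or.inl ?_⟩
    rw [h1Coords_IntAct_lowerTri_w₁]
    ext i; fin_cases i <;> simp <;> field_simp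

/-- For `(k₁, k₂, k₃) = (2, 2, 1)` there exist exactly two up to isomorphism
𝔰′-even-homogeneous non-split supermanifolds, corresponding to the classes of
`w₁ = (x⁻¹, 0, 0, 0, 0, (1/2)x⁻²)` and `w₂ = (0, 0, 0, −x⁻¹, x⁻², 0)`. -/
theorem stmt_16 (w1 w2 : V)
    (hw1 : w1 = ![T (-1), 0, 0, 0, 0, (1 / 2 : ℂ) • T (-2)])
    (hw2 : w2 = ![0, 0, 0, -T (-1), T (-2), 0]) :
    (E'op w1 ∈ B 2 2 1 ∧ F'op 2 2 1 w1 ∈ B 2 2 1 ∧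
     E'op w2 ∈ B 2 2 1 ∧ F'op 2 2 1 w2 ∈ B 2 2 1) ∧
    (w1 ∉ B 2 2 1 ∧ w2 ∉ B 2 2 1) ∧
    (¬∃ g : GElt ![2, 2, 1], IntAct g w1 - w2 ∈ B 2 2 1) ∧
    (∀ z : V, E'op z ∈ B 2 2 1 → F'op 2 2 1 z ∈ B 2 2 1 → z ∉ B 2 2 1 →
      ∃ g : GElt ![2, 2, 1],
        IntAct g w1 - z ∈ B 2 2 1 ∨ IntAct g w2 - z ∈ B 2 2 1) := by
  obtain rfl : w1 = w₁ := hw1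
  obtain rfl : w2 = w₂ := hw2
  refine ⟨⟨E'op_F'op_w₁_mem_B.1, E'op_F'op_w₁_mem_B.2, E'op_F'op_w₂_mem_B.1, E'op_F'op_w₂_mem_B.2⟩, ⟨?_, ?_⟩,
    not_exists_IntAct_w₁_sub_w₂_mem_B, fun z => exists_IntAct_sub_mem_B⟩
  · simp [mem_B_iff, h1Coords_w₁]
  · simp [mem_B_iff, h1Coords_w₂]
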